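/- arXiv:2107.12084 — 5 statements merged into one kernel-verified Lean document; each statement's English description precedes it below -/
import Mathlib

section
/- For each r ∈ {l,u} one has f_{r,x̄}(x̄) ≤ 0. Moreover, f_{l,x̄}(x̄) = 0 whenever WMin(F(x̄),K) ≠ ∅, and f_{u,x̄}(x̄) = 0 whenever WMax(F(x̄),K) ≠ ∅. -/
/-! Since `0 ∈ K`, `Ψ_e(0) ≤ 0`, which bounds both functionals at `x̄` by taking `y = ȳ`.
Conversely `Ψ_e(y) ≥ 0` whenever `-y ∉ int K`: if `t • e - y ∈ K` with `t < 0`, then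
`-y = (t • e - y) + (-t) • e ∈ K + int K ⊆ int K`. A weakly minimal (resp. maximal) point of
`F(x̄)` therefore makes the inner infimum nonnegative. -/

open Set Topology Metric

/-- The Gerstewitz (Tammer) scalarizing functional `Ψ_e(y) = inf {t : y ∈ t•e - K}`. -/
noncomputable def psiE {Y : Type*} [NormedAddCommGroup Y] [NormedSpace ℝ Y]
    (K : Set Y) (e : Y) (y : Y) : ℝ :=
  sInf {t : ℝ | t • e - y ∈ K}

/-- The lower inner function `g_l(x,z) = inf_{y ∈ F x} Ψ_e (y - z)` (with values in `EReal`). -/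
noncomputable def glow {X Y : Type*} [NormedAddCommGroup X] [NormedSpace ℝ X]
    [NormedAddCommGroup Y] [NormedSpace ℝ Y]
    (K : Set Y) (e : Y) (F : X → Set Y) (x : X) (z : Y) : EReal :=
  ⨅ y ∈ F x, (psiE K e (y - z) : EReal)

/-- The upper inner function `g_{u,x̄}(y) = inf_{ȳ ∈ F x̄} Ψ_e (y - ȳ)`. -/
noncomputable def gupp {X Y : Type*} [NormedAddCommGroup X] [NormedSpace ℝ X]
    [NormedAddCommGroup Y] [NormedSpace ℝ Y]
    (K : Set Y) (e : Y) (F : X → Set Y) (xbar : X) (y : Y) : EReal :=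
  ⨅ yb ∈ F xbar, (psiE K e (y - yb) : EReal)

/-- The lower scalarizing functional `f_{l,x̄}(x) = sup_{ȳ ∈ F x̄} g_l(x, ȳ)`. -/
noncomputable def flow {X Y : Type*} [NormedAddCommGroup X] [NormedSpace ℝ X]
    [NormedAddCommGroup Y] [NormedSpace ℝ Y]
    (K : Set Y) (e : Y) (F : X → Set Y) (xbar : X) (x : X) : EReal :=
  ⨆ yb ∈ F xbar, glow K e F x yb

/-- The upper scalarizing functional `f_{u,x̄}(x) = sup_{y ∈ F x} g_{u,x̄}(y)`. -/
noncomputable def fupp {X Y : Type*} [NormedAddCommGroup X] [NormedSpace ℝ X]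
    [NormedAddCommGroup Y] [NormedSpace ℝ Y]
    (K : Set Y) (e : Y) (F : X → Set Y) (xbar : X) (x : X) : EReal :=
  ⨆ y ∈ F x, gupp K e F xbar y

/-- Weakly minimal elements: `WMin(A,K) = {a ∈ A : (a - int K) ∩ A = ∅}`. -/
def wMinSet {Y : Type*} [NormedAddCommGroup Y] (A K : Set Y) : Set Y :=
  {a ∈ A | ∀ b ∈ A, a - b ∉ interior K}

/-- Weakly maximal elements: `WMax(A,K) = {a ∈ A : (a + int K) ∩ A = ∅}`. -/
def wMaxSet {Y : Type*} [NormedAddCommGroup Y] (A K : Set Y) : Set Y :=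
  {a ∈ A | ∀ b ∈ A, b - a ∉ interior K}

/-- Minimal elements: `Min(A,K) = {a ∈ A : (a - K) ∩ A = {a}}`. -/
def minSet {Y : Type*} [AddGroup Y] (A K : Set Y) : Set Y :=
  {a ∈ A | ∀ b ∈ A, a - b ∈ K → b = a}

section Cone

open scoped Pointwise

variable {E : Type*} [AddCommGroup E] [Module ℝ E] [TopologicalSpace E] {K : Set E}

theorem smul_mem_interior_of_cone [ContinuousConstSMul ℝ E]
    (hKcone : ∀ t : ℝ, 0 ≤ t → ∀ y ∈ K, t • y ∈ K) {t : ℝ} (ht : 0 < t) {u : E}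
    (hu : u ∈ interior K) : t • u ∈ interior K := by
  have hu' : t • u ∈ interior (t • K) := by
    rw [interior_smul₀ ht.ne']
    exact smul_mem_smul_set hu
  exact interior_mono (smul_set_subset_iff.2 fun y hy => hKcone t ht.le y hy) hu'

theorem add_mem_interior_of_convex_cone [IsTopologicalAddGroup E] [ContinuousSMul ℝ E]
    (hKcv : Convex ℝ K) (hKcone : ∀ t : ℝ, 0 ≤ t → ∀ y ∈ K, t • y ∈ K) {k u : E}
    (hk : k ∈ K) (hu : u ∈ interior K) : k + u ∈ interior K := by
  have hmid : (1 / 2 : ℝ) • k + (1 / 2 : ℝ) • u ∈ interior K :=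
    hKcv.combo_self_interior_mem_interior hk hu (by norm_num) (by norm_num) (by norm_num)
  have hdouble : k + u = (2 : ℝ) • ((1 / 2 : ℝ) • k + (1 / 2 : ℝ) • u) := by module
  rw [hdouble]
  exact smul_mem_interior_of_cone hKcone two_pos hmid

end Cone

section Scalarization

variable {X Y : Type*} [NormedAddCommGroup X] [NormedSpace ℝ X]
  [NormedAddCommGroup Y] [NormedSpace ℝ Y] {K : Set Y} {e : Y}

theorem psiE_zero_nonpos (h0K : (0 : Y) ∈ K) : psiE K e 0 ≤ 0 := by
  by_cases hbdd : BddBelow {t : ℝ | t • e - (0 : Y) ∈ K}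
  · exact csInf_le hbdd (by simpa using h0K)
  · exact (Real.sInf_of_not_bddBelow hbdd).le

theorem psiE_nonneg (hKcv : Convex ℝ K) (hKcone : ∀ t : ℝ, 0 ≤ t → ∀ y ∈ K, t • y ∈ K)
    (he : e ∈ interior K) {y : Y} (hy : -y ∉ interior K) : 0 ≤ psiE K e y := by
  refine Real.sInf_nonneg fun t ht => not_lt.1 fun htneg => hy ?_
  have hsum := add_mem_interior_of_convex_cone hKcv hKcone ht
    (smul_mem_interior_of_cone hKcone (neg_pos.2 htneg) he)
  rwa [neg_smul, ← sub_eq_add_neg, sub_sub_cancel_left] at hsum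

theorem flow_self_nonpos (h0K : (0 : Y) ∈ K) (F : X → Set Y) (x : X) :
    flow K e F x x ≤ 0 :=
  iSup₂_le fun y hy => (iInf₂_le y hy).trans <| by
    rw [sub_self]
    exact_mod_cast psiE_zero_nonpos h0K

theorem fupp_self_nonpos (h0K : (0 : Y) ∈ K) (F : X → Set Y) (x : X) :
    fupp K e F x x ≤ 0 :=
  iSup₂_le fun y hy => (iInf₂_le y hy).trans <| by
    rw [sub_self]
    exact_mod_cast psiE_zero_nonpos h0K

theorem flow_self_nonneg_of_mem_wMinSet (hKcv : Convex ℝ K)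
    (hKcone : ∀ t : ℝ, 0 ≤ t → ∀ y ∈ K, t • y ∈ K) (he : e ∈ interior K)
    {F : X → Set Y} {x : X} {a : Y} (ha : a ∈ wMinSet (F x) K) : 0 ≤ flow K e F x x := by
  refine le_trans ?_ (le_iSup₂ (f := fun yb (_ : yb ∈ F x) => glow K e F x yb) a ha.1)
  refine le_iInf₂ fun y hy => ?_
  have hpsi : 0 ≤ psiE K e (y - a) :=
    psiE_nonneg hKcv hKcone he (by simpa only [neg_sub] using ha.2 y hy)
  exact_mod_cast hpsi

theorem fupp_self_nonneg_of_mem_wMaxSet (hKcv : Convex ℝ K)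
    (hKcone : ∀ t : ℝ, 0 ≤ t → ∀ y ∈ K, t • y ∈ K) (he : e ∈ interior K)
    {F : X → Set Y} {x : X} {a : Y} (ha : a ∈ wMaxSet (F x) K) : 0 ≤ fupp K e F x x := by
  refine le_trans ?_ (le_iSup₂ (f := fun y (_ : y ∈ F x) => gupp K e F x y) a ha.1)
  refine le_iInf₂ fun yb hyb => ?_
  have hpsi : 0 ≤ psiE K e (a - yb) :=
    psiE_nonneg hKcv hKcone he (by simpa only [neg_sub] using ha.2 yb hyb)
  exact_mod_cast hpsi

end Scalarization

theorem stmt2_general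
    {X Y : Type*} [NormedAddCommGroup X] [NormedSpace ℝ X]
    [NormedAddCommGroup Y] [NormedSpace ℝ Y]
    (K : Set Y) (e : Y) (F : X → Set Y) (xbar : X)
    (hKcv : Convex ℝ K)
    (hKcone : ∀ t : ℝ, 0 ≤ t → ∀ y ∈ K, t • y ∈ K)
    (he : e ∈ interior K) :
    flow K e F xbar xbar ≤ 0 ∧ fupp K e F xbar xbar ≤ 0 ∧
    ((wMinSet (F xbar) K).Nonempty → flow K e F xbar xbar = 0) ∧
    ((wMaxSet (F xbar) K).Nonempty → fupp K e F xbar xbar = 0) := by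
  have h0K : (0 : Y) ∈ K := by simpa using hKcone 0 le_rfl e (interior_subset he)
  refine ⟨flow_self_nonpos h0K F xbar, fupp_self_nonpos h0K F xbar, ?_, ?_⟩
  · rintro ⟨a, ha⟩
    exact le_antisymm (flow_self_nonpos h0K F xbar)
      (flow_self_nonneg_of_mem_wMinSet hKcv hKcone he ha)
  · rintro ⟨a, ha⟩
    exact le_antisymm (fupp_self_nonpos h0K F xbar)
      (fupp_self_nonneg_of_mem_wMaxSet hKcv hKcone he ha)

/-- f_{r,x̄}(x̄) ≤ 0, with equality under nonemptiness of WMin / WMax. -/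
theorem stmt2
    {X Y : Type*} [NormedAddCommGroup X] [NormedSpace ℝ X] [CompleteSpace X]
    [NormedAddCommGroup Y] [NormedSpace ℝ Y] [CompleteSpace Y]
    (K : Set Y) (e : Y) (F : X → Set Y) (Ω : Set X) (xbar : X)
    (hKcl : IsClosed K) (hKcv : Convex ℝ K)
    (hKcone : ∀ t : ℝ, 0 ≤ t → ∀ y ∈ K, t • y ∈ K)
    (hKpt : K ∩ (-K) = {0})
    (he : e ∈ interior K)
    (hΩne : Ω.Nonempty) (hΩcl : IsClosed Ω)
    (hΩdom : Ω ⊆ interior {x | (F x).Nonempty})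
    (hxΩ : xbar ∈ Ω) :
    flow K e F xbar xbar ≤ 0 ∧ fupp K e F xbar xbar ≤ 0 ∧
    ((wMinSet (F xbar) K).Nonempty → flow K e F xbar xbar = 0) ∧
    ((wMaxSet (F xbar) K).Nonempty → fupp K e F xbar xbar = 0) :=
  stmt2_general K e F xbar hKcv hKcone he
end

section
/- If F is ⪯ˡ_K-convex, then for every ȳ ∈ F(x̄) the function x ↦ g_l(x,ȳ) is convex. If moreover F is locally l-bounded at x̄, then x̄ belongs to the interior of the effective domain of g_l(·,ȳ), and g_l(·,ȳ) is finite and continuous at x̄. -/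
/-!
The Gerstewitz functional `Ψ_e` is convex and monotone along `K`, so `⪯ˡ_K`-convexity of `F`
passes to the strict epigraph of `g_l(·, ȳ)`, and hence to its epigraph. Local `l`-boundedness
squeezes `g_l(·, ȳ)` between `Ψ_e(-μe - ȳ)` and `Ψ_e(μe - ȳ)` near `x̄`, and a convex function that
is finite and bounded above near a point is continuous there.
-/

open Set Topology Metric Pointwise

open Filter

section ConeScalarization

variable {Y : Type*} [NormedAddCommGroup Y] [NormedSpace ℝ Y] {K : Set Y} {e : Y}

lemma add_mem_of_convex_of_smul_mem (hKcv : Convex ℝ K)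
    (hKcone : ∀ t : ℝ, 0 ≤ t → ∀ y ∈ K, t • y ∈ K) {a b : Y} (ha : a ∈ K) (hb : b ∈ K) :
    a + b ∈ K := by
  convert hKcone 2 zero_le_two _ (hKcv ha hb (by norm_num : (0 : ℝ) ≤ 1 / 2)
    (by norm_num : (0 : ℝ) ≤ 1 / 2) (by norm_num)) using 1
  module

-- If `-e ∈ K` then `e = 0`, so the cone `K` is a neighbourhood of `0`, hence all of `Y`.
lemma neg_notMem_of_inter_neg_eq_singleton_zero [Nontrivial Y]
    (hKcone : ∀ t : ℝ, 0 ≤ t → ∀ y ∈ K, t • y ∈ K) (hKpt : K ∩ (-K) = {0})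
    (he : e ∈ interior K) : -e ∉ K := by
  intro hneg
  have he0 : e = 0 := by
    have : e ∈ K ∩ (-K) := ⟨interior_subset he, by simpa using hneg⟩
    rwa [hKpt] at this
  have hK : ∀ z, z ∈ K := by
    intro z
    have hsmall : ∀ᶠ c : ℝ in 𝓝[>] 0, c • z ∈ K := by
      have hlim : Tendsto (fun c : ℝ => c • z) (𝓝[>] 0) (𝓝 0) :=
        ((continuous_id.smul continuous_const).tendsto' 0 0 (zero_smul ℝ z)).mono_left
          nhdsWithin_le_nhds
      exact hlim (he0 ▸ mem_interior_iff_mem_nhds.mp he)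
    obtain ⟨c, hcz, hc⟩ := (hsmall.and self_mem_nhdsWithin).exists
    simpa [smul_smul, inv_mul_cancel₀ (ne_of_gt hc)] using hKcone c⁻¹ (inv_nonneg.2 hc.le) _ hcz
  obtain ⟨z, hz⟩ := exists_ne (0 : Y)
  exact hz (by rw [← mem_singleton_iff, ← hKpt]; exact ⟨hK z, by simpa using hK (-z)⟩)

lemma nonempty_setOf_smul_sub_mem (hKcone : ∀ t : ℝ, 0 ≤ t → ∀ y ∈ K, t • y ∈ K)
    (he : e ∈ interior K) (y : Y) : {t : ℝ | t • e - y ∈ K}.Nonempty := by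
  have hlim : Tendsto (fun t : ℝ => e - t⁻¹ • y) atTop (𝓝 e) := by
    simpa using (tendsto_inv_atTop_zero (𝕜 := ℝ)).smul_const y |>.const_sub e
  obtain ⟨t, ht, ht0⟩ := ((hlim.eventually (mem_interior_iff_mem_nhds.mp he)).and
    (eventually_gt_atTop 0)).exists
  refine ⟨t, ?_⟩
  simpa [smul_sub, smul_smul, mul_inv_cancel₀ (ne_of_gt ht0)] using
    hKcone t ht0.le _ ht

lemma bddBelow_setOf_smul_sub_mem (hKcl : IsClosed K)
    (hKcone : ∀ t : ℝ, 0 ≤ t → ∀ y ∈ K, t • y ∈ K) (hneg : -e ∉ K) (y : Y) :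
    BddBelow {t : ℝ | t • e - y ∈ K} := by
  have hlim : Tendsto (fun t : ℝ => -e + t⁻¹ • y) atBot (𝓝 (-e)) := by
    simpa using (tendsto_inv_atBot_zero (𝕜 := ℝ)).smul_const y |>.const_add (-e)
  obtain ⟨T, hT⟩ := eventually_atBot.mp ((hlim.eventually
    (hKcl.isOpen_compl.mem_nhds hneg)).and (eventually_lt_atBot 0))
  refine ⟨T, fun t ht => le_of_not_gt fun htT => (hT t htT.le).1 ?_⟩
  have ht0 : t < 0 := (hT t htT.le).2
  convert hKcone (-t)⁻¹ (inv_nonneg.2 (neg_nonneg.2 ht0.le)) _ ht using 1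
  rw [smul_sub, smul_smul, inv_neg, neg_mul, inv_mul_cancel₀ ht0.ne, neg_smul, one_smul,
    neg_smul, sub_neg_eq_add]

-- `-e ∉ K` bounds the defining set below, and closedness of `K` makes its infimum attained.
lemma psiE_le_iff (hKcl : IsClosed K) (hKcv : Convex ℝ K)
    (hKcone : ∀ t : ℝ, 0 ≤ t → ∀ y ∈ K, t • y ∈ K) (he : e ∈ interior K) (hneg : -e ∉ K)
    {y : Y} {t : ℝ} : psiE K e y ≤ t ↔ t • e - y ∈ K := by
  have hB := bddBelow_setOf_smul_sub_mem hKcl hKcone hneg y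
  refine ⟨fun h => ?_, fun h => csInf_le hB h⟩
  have hmem : psiE K e y • e - y ∈ K :=
    (hKcl.preimage (by fun_prop)).csInf_mem (nonempty_setOf_smul_sub_mem hKcone he y) hB
  convert add_mem_of_convex_of_smul_mem hKcv hKcone
    (hKcone _ (sub_nonneg.2 h) e (interior_subset he)) hmem using 1
  module

lemma psiE_of_subsingleton [Subsingleton Y] (K : Set Y) (e y : Y) : psiE K e y = 0 := by
  have h : ∀ t : ℝ, t • e - y ∈ K ↔ (0 : Y) ∈ K := fun t => by
    rw [Subsingleton.elim (t • e - y) 0]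
  by_cases h0 : (0 : Y) ∈ K <;> simp [psiE, h, h0]

lemma psiE_le_psiE_add (hKcl : IsClosed K) (hKcv : Convex ℝ K)
    (hKcone : ∀ t : ℝ, 0 ≤ t → ∀ y ∈ K, t • y ∈ K) (hKpt : K ∩ (-K) = {0})
    (he : e ∈ interior K) (a : Y) {k : Y} (hk : k ∈ K) : psiE K e a ≤ psiE K e (a + k) := by
  rcases subsingleton_or_nontrivial Y with _ | _
  · simp [psiE_of_subsingleton]
  have hneg := neg_notMem_of_inter_neg_eq_singleton_zero hKcone hKpt he
  rw [psiE_le_iff hKcl hKcv hKcone he hneg]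
  convert add_mem_of_convex_of_smul_mem hKcv hKcone
    ((psiE_le_iff hKcl hKcv hKcone he hneg (y := a + k)).1 le_rfl) hk using 1
  abel

lemma convexOn_psiE (hKcl : IsClosed K) (hKcv : Convex ℝ K)
    (hKcone : ∀ t : ℝ, 0 ≤ t → ∀ y ∈ K, t • y ∈ K) (hKpt : K ∩ (-K) = {0})
    (he : e ∈ interior K) : ConvexOn ℝ univ (psiE K e) := by
  refine ⟨convex_univ, fun a _ b _ s t hs ht hst => ?_⟩
  rcases subsingleton_or_nontrivial Y with _ | _
  · simp [psiE_of_subsingleton]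
  have hneg := neg_notMem_of_inter_neg_eq_singleton_zero hKcone hKpt he
  have hsub : ∀ y, psiE K e y • e - y ∈ K := fun y =>
    (psiE_le_iff hKcl hKcv hKcone he hneg).1 le_rfl
  rw [smul_eq_mul, smul_eq_mul, psiE_le_iff hKcl hKcv hKcone he hneg]
  convert hKcv (hsub a) (hsub b) hs ht hst using 1
  module

end ConeScalarization

section ExtendedRealConvexity

variable {X : Type*} [NormedAddCommGroup X] [NormedSpace ℝ X]

lemma convex_epigraph_of_convex_strictEpigraph {f : X → EReal}
    (hf : Convex ℝ {p : X × ℝ | f p.1 < p.2}) : Convex ℝ {p : X × ℝ | f p.1 ≤ p.2} := by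
  intro p hp q hq a b ha hb hab
  refine EReal.le_of_forall_lt_iff_le.1 fun s hs => ?_
  set ε := s - (a • p + b • q).2
  have hε : 0 < ε := sub_pos.2 (EReal.coe_lt_coe_iff.1 hs)
  have hp' : f p.1 < ((p.2 + ε : ℝ) : EReal) :=
    (show f p.1 ≤ p.2 from hp).trans_lt (by exact_mod_cast lt_add_of_pos_right _ hε)
  have hq' : f q.1 < ((q.2 + ε : ℝ) : EReal) :=
    (show f q.1 ≤ q.2 from hq).trans_lt (by exact_mod_cast lt_add_of_pos_right _ hε)
  have hcomb : a • (p.1, p.2 + ε) + b • (q.1, q.2 + ε) = ((a • p + b • q).1, s) := by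
    ext
    · simp
    · simp only [Prod.smul_mk, Prod.mk_add_mk, smul_eq_mul, ε, Prod.snd_add, Prod.smul_snd]
      linear_combination (s - (a * p.2 + b * q.2)) * hab
  have h := hf (x := (p.1, p.2 + ε)) hp' (y := (q.1, q.2 + ε)) hq' ha hb hab
  rw [hcomb] at h
  exact h.le

lemma convexOn_of_convex_ereal_epigraph {f : X → EReal} {g : X → ℝ} {V : Set X} (hV : Convex ℝ V)
    (hf : Convex ℝ {p : X × ℝ | f p.1 ≤ p.2}) (hfg : ∀ x ∈ V, f x = g x) : ConvexOn ℝ V g := by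
  refine ⟨hV, fun x hx y hy a b ha hb hab => ?_⟩
  have h := hf (x := (x, g x)) (hfg x hx).le (y := (y, g y)) (hfg y hy).le ha hb hab
  simp only [mem_ofPred_eq, Prod.fst_add, Prod.snd_add, Prod.smul_fst, Prod.smul_snd] at h
  rw [hfg _ (hV hx hy ha hb hab)] at h
  exact_mod_cast h

lemma continuousAt_of_convex_epigraph {f : X → EReal} {x₀ : X} {C : ℝ}
    (hf : Convex ℝ {p : X × ℝ | f p.1 ≤ p.2}) (hbot : ∀ᶠ x in 𝓝 x₀, f x ≠ ⊥)
    (hle : ∀ᶠ x in 𝓝 x₀, f x ≤ C) : ContinuousAt f x₀ := by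
  obtain ⟨ρ, hρ, hball⟩ := Metric.mem_nhds_iff.1 (hbot.and hle)
  have hcoe : ∀ x ∈ ball x₀ ρ, f x = (f x).toReal := fun x hx =>
    (EReal.coe_toReal (ne_top_of_le_ne_top (EReal.coe_ne_top C) (hball hx).2) (hball hx).1).symm
  have hg : ConvexOn ℝ (ball x₀ ρ) fun x => (f x).toReal :=
    convexOn_of_convex_ereal_epigraph (convex_ball x₀ ρ) hf hcoe
  have hgC : ∀ᶠ x in 𝓝 x₀, (f x).toReal ≤ C := by
    filter_upwards [ball_mem_nhds x₀ hρ] with x hx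
    exact_mod_cast (hcoe x hx).symm.trans_le (hball hx).2
  have hgc : ContinuousOn (fun x => (f x).toReal) (ball x₀ ρ) := by
    have hbdd_iff := (hg.continuousOn_tfae isOpen_ball ⟨x₀, mem_ball_self hρ⟩).out 3 1
    exact hbdd_iff.mp ⟨x₀, mem_ball_self hρ, isBoundedUnder_of_eventually_le hgC⟩
  refine (continuous_coe_real_ereal.continuousAt.comp
    (hgc.continuousAt (ball_mem_nhds x₀ hρ))).congr ?_
  filter_upwards [ball_mem_nhds x₀ hρ] with x hx
  exact (hcoe x hx).symm

end ExtendedRealConvexity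

section LowerInnerFunction

variable {X Y : Type*} [NormedAddCommGroup X] [NormedSpace ℝ X]
  [NormedAddCommGroup Y] [NormedSpace ℝ Y] {K : Set Y} {e : Y} {F : X → Set Y}

lemma glow_lt_coe_iff {x : X} {z : Y} {r : ℝ} :
    glow K e F x z < r ↔ ∃ y ∈ F x, psiE K e (y - z) < r := by
  simp only [glow, iInf_lt_iff, EReal.coe_lt_coe_iff, exists_prop]

lemma convex_strictEpigraph_glow
    (hmono : ∀ a k : Y, k ∈ K → psiE K e a ≤ psiE K e (a + k))
    (hψ : ConvexOn ℝ univ (psiE K e))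
    (hconv : ∀ x₁ x₂ : X, (F x₁).Nonempty → (F x₂).Nonempty → ∀ t : ℝ, t ∈ Set.Ioo (0:ℝ) 1 →
      t • F x₁ + (1 - t) • F x₂ ⊆ F (t • x₁ + (1 - t) • x₂) + K) (z : Y) :
    Convex ℝ {p : X × ℝ | glow K e F p.1 z < p.2} := by
  refine convex_iff_forall_pos.2 fun p hp q hq a b ha hb hab => ?_
  obtain ⟨y₁, hy₁, h₁⟩ := glow_lt_coe_iff.1 hp
  obtain ⟨y₂, hy₂, h₂⟩ := glow_lt_coe_iff.1 hq
  obtain rfl : b = 1 - a := by linarith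
  obtain ⟨y, hy, k, hk, hyk⟩ := hconv p.1 q.1 ⟨y₁, hy₁⟩ ⟨y₂, hy₂⟩ a ⟨ha, by linarith⟩
    (add_mem_add (smul_mem_smul_set hy₁) (smul_mem_smul_set hy₂))
  refine glow_lt_coe_iff.2 ⟨y, hy, ?_⟩
  calc psiE K e (y - z) ≤ psiE K e (y - z + k) := hmono _ _ hk
    _ = psiE K e (a • (y₁ - z) + (1 - a) • (y₂ - z)) := by
      congr 1
      rw [sub_add_eq_add_sub, show y + k = _ from hyk]
      module
    _ ≤ a * psiE K e (y₁ - z) + (1 - a) * psiE K e (y₂ - z) :=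
      hψ.2 trivial trivial ha.le hb.le (by ring)
    _ < a * p.2 + (1 - a) * q.2 := by gcongr
    _ = (a • p + (1 - a) • q).2 := by simp

lemma glow_mem_Icc_of_inter_orderInterval_add_eq
    (hmono : ∀ a k : Y, k ∈ K → psiE K e a ≤ psiE K e (a + k)) (h0K : (0 : Y) ∈ K)
    {μ : ℝ} {x : X} (z : Y)
    (hbd : (F x ∩ {y : Y | y + μ • e ∈ K ∧ μ • e - y ∈ K}) + K = F x + K)
    (hne : (F x).Nonempty) :
    glow K e F x z ∈ Icc (psiE K e (-(μ • e) - z) : EReal) (psiE K e (μ • e - z)) := by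
  have hmem : ∀ y ∈ F x, y ∈ (F x ∩ {y : Y | y + μ • e ∈ K ∧ μ • e - y ∈ K}) + K :=
    fun y hy => hbd ▸ ⟨y, hy, 0, h0K, add_zero y⟩
  refine ⟨le_iInf₂ fun y hy => ?_, ?_⟩
  · obtain ⟨y', ⟨-, hlow, -⟩, k, hk, rfl⟩ := hmem y hy
    have h₁ := hmono (-(μ • e) - z) _ hlow
    have h₂ := hmono (y' - z) k hk
    rw [show -(μ • e) - z + (y' + μ • e) = y' - z by abel] at h₁
    rw [show y' - z + k = y' + k - z by abel] at h₂
    exact_mod_cast h₁.trans h₂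
  · obtain ⟨y, hy⟩ := hne
    obtain ⟨y', ⟨hy'F, -, hup⟩, -⟩ := hmem y hy
    have h := hmono (y' - z) _ hup
    rw [show y' - z + (μ • e - y') = μ • e - z by abel] at h
    exact (iInf₂_le y' hy'F).trans (by exact_mod_cast h)

end LowerInnerFunction

theorem stmt3_general
    {X Y : Type*} [NormedAddCommGroup X] [NormedSpace ℝ X]
    [NormedAddCommGroup Y] [NormedSpace ℝ Y]
    (K : Set Y) (e : Y) (F : X → Set Y) (Ω : Set X) (xbar : X)
    (hKcl : IsClosed K) (hKcv : Convex ℝ K)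
    (hKcone : ∀ t : ℝ, 0 ≤ t → ∀ y ∈ K, t • y ∈ K)
    (hKpt : K ∩ (-K) = {0})
    (he : e ∈ interior K)
    (hΩdom : Ω ⊆ interior {x | (F x).Nonempty})
    (hxΩ : xbar ∈ Ω)
    (hconv : ∀ x₁ x₂ : X, (F x₁).Nonempty → (F x₂).Nonempty → ∀ t : ℝ, t ∈ Set.Ioo (0:ℝ) 1 →
      t • F x₁ + (1 - t) • F x₂ ⊆ F (t • x₁ + (1 - t) • x₂) + K) :
    (∀ ybar ∈ F xbar, Convex ℝ {p : X × ℝ | glow K e F p.1 ybar ≤ (p.2 : EReal)}) ∧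
    ((∃ μ > (0:ℝ), ∃ U ∈ 𝓝 xbar, ∀ x ∈ U,
        (F x ∩ {y : Y | y + μ • e ∈ K ∧ μ • e - y ∈ K}) + K = F x + K) →
      ∀ ybar ∈ F xbar,
        xbar ∈ interior {x : X | glow K e F x ybar < ⊤} ∧
        glow K e F xbar ybar ≠ ⊥ ∧ glow K e F xbar ybar ≠ ⊤ ∧
        ContinuousAt (fun x => glow K e F x ybar) xbar) := by
  have hmono : ∀ a k : Y, k ∈ K → psiE K e a ≤ psiE K e (a + k) := fun a _ hk =>
    psiE_le_psiE_add hKcl hKcv hKcone hKpt he a hk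
  have hepi : ∀ z : Y, Convex ℝ {p : X × ℝ | glow K e F p.1 z ≤ p.2} := fun z =>
    convex_epigraph_of_convex_strictEpigraph (f := (glow K e F · z)) <|
      convex_strictEpigraph_glow hmono (convexOn_psiE hKcl hKcv hKcone hKpt he) hconv z
  refine ⟨fun ybar _ => hepi ybar, ?_⟩
  rintro ⟨μ, -, U, hU, hbd⟩ ybar -
  have h0K : (0 : Y) ∈ K := by simpa using hKcone 0 le_rfl e (interior_subset he)
  have hbounds : ∀ᶠ x in 𝓝 xbar,
      glow K e F x ybar ∈ Icc (psiE K e (-(μ • e) - ybar) : EReal) (psiE K e (μ • e - ybar)) := by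
    filter_upwards [hU, mem_interior_iff_mem_nhds.1 (hΩdom hxΩ)] with x hxU hxF
    exact glow_mem_Icc_of_inter_orderInterval_add_eq hmono h0K ybar (hbd x hxU) hxF
  have hlt_top : ∀ᶠ x in 𝓝 xbar, glow K e F x ybar < ⊤ :=
    hbounds.mono fun _ hx => hx.2.trans_lt (EReal.coe_lt_top _)
  have hne_bot : ∀ᶠ x in 𝓝 xbar, glow K e F x ybar ≠ ⊥ :=
    hbounds.mono fun _ hx => ne_bot_of_le_ne_bot (EReal.coe_ne_bot _) hx.1
  exact ⟨mem_interior_iff_mem_nhds.2 hlt_top, hne_bot.self_of_nhds, hlt_top.self_of_nhds.ne,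
    continuousAt_of_convex_epigraph (hepi ybar) hne_bot (hbounds.mono fun _ hx => hx.2)⟩

/-- if F is ⪯ˡ_K-convex then g_l(·,ȳ) is convex (epigraph convexity) for every
ȳ ∈ F(x̄); if moreover F is locally l-bounded at x̄, then x̄ lies in the interior of the
effective domain of g_l(·,ȳ) and g_l(·,ȳ) is finite and continuous at x̄. -/
theorem stmt3
    {X Y : Type*} [NormedAddCommGroup X] [NormedSpace ℝ X] [CompleteSpace X]
    [NormedAddCommGroup Y] [NormedSpace ℝ Y] [CompleteSpace Y]
    (K : Set Y) (e : Y) (F : X → Set Y) (Ω : Set X) (xbar : X)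
    (hKcl : IsClosed K) (hKcv : Convex ℝ K)
    (hKcone : ∀ t : ℝ, 0 ≤ t → ∀ y ∈ K, t • y ∈ K)
    (hKpt : K ∩ (-K) = {0})
    (he : e ∈ interior K)
    (hΩne : Ω.Nonempty) (hΩcl : IsClosed Ω)
    (hΩdom : Ω ⊆ interior {x | (F x).Nonempty})
    (hxΩ : xbar ∈ Ω)
    (hconv : ∀ x₁ x₂ : X, (F x₁).Nonempty → (F x₂).Nonempty → ∀ t : ℝ, t ∈ Set.Ioo (0:ℝ) 1 →
      t • F x₁ + (1 - t) • F x₂ ⊆ F (t • x₁ + (1 - t) • x₂) + K) :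
    (∀ ybar ∈ F xbar, Convex ℝ {p : X × ℝ | glow K e F p.1 ybar ≤ (p.2 : EReal)}) ∧
    ((∃ μ > (0:ℝ), ∃ U ∈ 𝓝 xbar, ∀ x ∈ U,
        (F x ∩ {y : Y | y + μ • e ∈ K ∧ μ • e - y ∈ K}) + K = F x + K) →
      ∀ ybar ∈ F xbar,
        xbar ∈ interior {x : X | glow K e F x ybar < ⊤} ∧
        glow K e F xbar ybar ≠ ⊥ ∧ glow K e F xbar ybar ≠ ⊤ ∧
        ContinuousAt (fun x => glow K e F x ybar) xbar) :=
  stmt3_general K e F Ω xbar hKcl hKcv hKcone hKpt he hΩdom hxΩ hconv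
end

section
/- Let F be Lipschitzian on a set U ⊆ X with constant ℓ > 0, with F(x) ≠ ∅ for all x ∈ U, and let f : X × Y → ℝ ∪ {±∞} be Lipschitzian on (U × Y) ∩ gph F with constant ℓ' > 0 (with respect to the sum norm ‖(x,y)‖ = ‖x‖ + ‖y‖). Define the marginal function φ(x) := inf_{y ∈ F(x)} f(x,y). If φ(x̄) > −∞ for some x̄ ∈ U, then φ is finite and Lipschitzian on U with constant ℓ'(1+ℓ). -/
/-! Each `y ∈ F x` has a partner `y' ∈ F x'` within `ℓ‖x - x'‖`, and moving to it raises `f` by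
at most `ℓ'(1 + ℓ)‖x - x'‖`; hence `φ = marginal F f` satisfies
`φ x' ≤ φ x + ℓ'(1 + ℓ)‖x - x'‖` in `EReal` on `U`. Taking `x' = x̄` shows `φ x ≠ ⊥`, and
`φ x ≠ ⊤` because `F x ≠ ∅`, after which the two one-sided bounds are the Lipschitz estimate. -/

open Set Topology Metric Pointwise

section Marginal

variable {X Y : Type*}

noncomputable def marginal (F : X → Set Y) (f : X × Y → EReal) (x : X) : EReal :=
  ⨅ y ∈ F x, f (x, y)

theorem marginal_ne_top {F : X → Set Y} {f : X × Y → EReal} {x : X} {y : Y} (hy : y ∈ F x)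
    (hf : f (x, y) ≠ ⊤) : marginal F f x ≠ ⊤ :=
  ne_top_of_le_ne_top hf (iInf₂_le y hy)

theorem marginal_le_add_of_forall_exists_le {F : X → Set Y} {f : X × Y → EReal} {x x' : X}
    {c : ℝ} (h : ∀ y ∈ F x, ∃ y' ∈ F x', f (x', y') ≤ f (x, y) + c) :
    marginal F f x' ≤ marginal F f x + c := by
  have hsub : marginal F f x' - c ≤ marginal F f x := by
    refine le_iInf₂ fun y hy => EReal.sub_le_of_le_add ?_
    obtain ⟨y', hy', hle⟩ := h y hy
    exact (iInf₂_le y' hy').trans hle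
  exact (EReal.sub_le_iff_le_add (.inl (EReal.coe_ne_bot c)) (.inl (EReal.coe_ne_top c))).1 hsub

end Marginal

theorem EReal.le_add_of_toReal_le_add {a b : EReal} {c : ℝ} (ha : a ≠ ⊥ ∧ a ≠ ⊤)
    (hb : b ≠ ⊥ ∧ b ≠ ⊤) (h : a.toReal ≤ b.toReal + c) : a ≤ b + c := by
  lift a to ℝ using ha.symm
  lift b to ℝ using hb.symm
  exact_mod_cast h

theorem EReal.abs_toReal_sub_le {a b : EReal} {c : ℝ} (ha : a ≠ ⊥ ∧ a ≠ ⊤)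
    (hb : b ≠ ⊥ ∧ b ≠ ⊤) (hab : a ≤ b + c) (hba : b ≤ a + c) : |a.toReal - b.toReal| ≤ c := by
  lift a to ℝ using ha.symm
  lift b to ℝ using hb.symm
  norm_cast at hab hba
  rw [EReal.toReal_coe, EReal.toReal_coe]
  exact abs_sub_le_iff.2 ⟨by linarith, by linarith⟩

theorem exists_mem_le_add_of_subset_add_closedBall {X Y : Type*} [SeminormedAddCommGroup X]
    [SeminormedAddCommGroup Y] {F : X → Set Y} {g : X × Y → ℝ} {x x' : X} {y : Y} {ℓ ℓ' : ℝ}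
    (hℓ' : 0 ≤ ℓ') (hF : F x ⊆ F x' + closedBall 0 (ℓ * ‖x - x'‖))
    (hg : ∀ y' ∈ F x', g (x', y') - g (x, y) ≤ ℓ' * (‖x' - x‖ + ‖y' - y‖)) (hy : y ∈ F x) :
    ∃ y' ∈ F x', g (x', y') ≤ g (x, y) + ℓ' * (1 + ℓ) * ‖x - x'‖ := by
  obtain ⟨y', hy', b, hb, rfl⟩ := hF hy
  refine ⟨y', hy', ?_⟩
  have hdist : ‖y' - (y' + b)‖ ≤ ℓ * ‖x - x'‖ := by simpa using hb
  have := hg y' hy'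
  rw [norm_sub_rev x'] at this
  nlinarith [mul_le_mul_of_nonneg_left hdist hℓ']

theorem stmt7_general
    {X Y : Type*} [NormedAddCommGroup X]
    [NormedAddCommGroup Y]
    (F : X → Set Y) (U : Set X) (f : X × Y → EReal) (ℓ ℓ' : ℝ)
    (hℓ' : 0 < ℓ')
    (hFne : ∀ x ∈ U, (F x).Nonempty)
    (hFlip : ∀ x ∈ U, ∀ x' ∈ U, F x ⊆ F x' + Metric.closedBall (0 : Y) (ℓ * ‖x - x'‖))
    (hffin : ∀ p : X × Y, p.1 ∈ U → p.2 ∈ F p.1 → f p ≠ ⊥ ∧ f p ≠ ⊤)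
    (hflip : ∀ p q : X × Y, p.1 ∈ U → p.2 ∈ F p.1 → q.1 ∈ U → q.2 ∈ F q.1 →
      |(f p).toReal - (f q).toReal| ≤ ℓ' * (‖p.1 - q.1‖ + ‖p.2 - q.2‖))
    (xbar : X) (hx : xbar ∈ U)
    (hphibar : (⨅ y ∈ F xbar, f (xbar, y)) ≠ ⊥) :
    (∀ x ∈ U, (⨅ y ∈ F x, f (x, y)) ≠ ⊥ ∧ (⨅ y ∈ F x, f (x, y)) ≠ ⊤) ∧
    (∀ x ∈ U, ∀ x' ∈ U,
      |(⨅ y ∈ F x, f (x, y)).toReal - (⨅ y ∈ F x', f (x', y)).toReal| ≤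
        ℓ' * (1 + ℓ) * ‖x - x'‖) := by
  have hmove : ∀ x ∈ U, ∀ x' ∈ U, ∀ y ∈ F x,
      ∃ y' ∈ F x', f (x', y') ≤ f (x, y) + ↑(ℓ' * (1 + ℓ) * ‖x - x'‖) := by
    intro x hxU x' hx'U y hy
    obtain ⟨y', hy', hle⟩ := exists_mem_le_add_of_subset_add_closedBall (g := fun p => (f p).toReal)
      hℓ'.le (hFlip x hxU x' hx'U) (fun y' hy' => (abs_le.1 (hflip _ _ hx'U hy' hxU hy)).2) hy
    exact ⟨y', hy', EReal.le_add_of_toReal_le_add (hffin _ hx'U hy') (hffin _ hxU hy) hle⟩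
  have hlip : ∀ x ∈ U, ∀ x' ∈ U,
      marginal F f x' ≤ marginal F f x + ↑(ℓ' * (1 + ℓ) * ‖x - x'‖) := fun x hxU x' hx'U =>
    marginal_le_add_of_forall_exists_le (hmove x hxU x' hx'U)
  have hfin : ∀ x ∈ U, marginal F f x ≠ ⊥ ∧ marginal F f x ≠ ⊤ := by
    intro x hxU
    obtain ⟨y, hy⟩ := hFne x hxU
    refine ⟨fun hbot => hphibar ?_, marginal_ne_top hy (hffin (x, y) hxU hy).2⟩
    have h := hlip x hxU xbar hx
    rw [hbot, EReal.bot_add] at h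
    exact le_bot_iff.1 h
  refine ⟨hfin, fun x hxU x' hx'U => EReal.abs_toReal_sub_le (hfin x hxU) (hfin x' hx'U)
    ?_ (hlip x hxU x' hx'U)⟩
  rw [norm_sub_rev]
  exact hlip x' hx'U x hxU

/-- Lipschitz property of the inf-marginal function φ(x) = inf_{y ∈ F x} f(x,y). -/
theorem stmt7
    {X Y : Type*} [NormedAddCommGroup X] [NormedSpace ℝ X] [CompleteSpace X]
    [NormedAddCommGroup Y] [NormedSpace ℝ Y] [CompleteSpace Y]
    (F : X → Set Y) (U : Set X) (f : X × Y → EReal) (ℓ ℓ' : ℝ)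
    (hℓ : 0 < ℓ) (hℓ' : 0 < ℓ')
    (hFne : ∀ x ∈ U, (F x).Nonempty)
    (hFlip : ∀ x ∈ U, ∀ x' ∈ U, F x ⊆ F x' + Metric.closedBall (0 : Y) (ℓ * ‖x - x'‖))
    (hffin : ∀ p : X × Y, p.1 ∈ U → p.2 ∈ F p.1 → f p ≠ ⊥ ∧ f p ≠ ⊤)
    (hflip : ∀ p q : X × Y, p.1 ∈ U → p.2 ∈ F p.1 → q.1 ∈ U → q.2 ∈ F q.1 →
      |(f p).toReal - (f q).toReal| ≤ ℓ' * (‖p.1 - q.1‖ + ‖p.2 - q.2‖))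
    (xbar : X) (hx : xbar ∈ U)
    (hphibar : (⨅ y ∈ F xbar, f (xbar, y)) ≠ ⊥) :
    (∀ x ∈ U, (⨅ y ∈ F x, f (x, y)) ≠ ⊥ ∧ (⨅ y ∈ F x, f (x, y)) ≠ ⊤) ∧
    (∀ x ∈ U, ∀ x' ∈ U,
      |(⨅ y ∈ F x, f (x, y)).toReal - (⨅ y ∈ F x', f (x', y)).toReal| ≤
        ℓ' * (1 + ℓ) * ‖x - x'‖) :=
  stmt7_general F U f ℓ ℓ' hℓ' hFne hFlip hffin hflip xbar hx hphibar
end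

section
/- Let F be ⪯ˡ_K-convex and locally l-bounded at x̄, and let ȳ ∈ WMin(E_F(x̄),K), where E_F(x) := F(x) + K. Then the convex subdifferential of the convex function g_{l,ȳ} := g_l(·,ȳ) at x̄ satisfies ∂g_{l,ȳ}(x̄) = ⋃_{y* ∈ ∂Ψ_e(0)} D*E_F(x̄,ȳ)(y*), where x* ∈ D*E_F(x̄,ȳ)(y*) means ⟨x*, x − x̄⟩ ≤ ⟨y*, y − ȳ⟩ for all (x,y) with y ∈ E_F(x). -/
open Set Topology Metric Pointwise

/-! A subgradient `x*` of `g_l(·, ȳ)` at `x̄` satisfies `⟨x*, x - x̄⟩ ≤ Ψ_e(y - ȳ)` on the graph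
of `E_F`, because `g_l(x̄, ȳ) = 0` by weak minimality of `ȳ`. The graph of `E_F` is convex, and the
strict epigraph of `Ψ_e` is `{(v, s) : s e - v ∈ int K}`, an open convex set. Separating it from
the hypograph of `x*` over the shifted graph gives a functional `y* ≤ Ψ_e` that still dominates
`x*` there, i.e. `y* ∈ ∂Ψ_e(0)` and `x* ∈ D*E_F(x̄, ȳ)(y*)`. The converse inclusion is immediate. -/

open Filter

section Cone

variable {E : Type*} [AddCommGroup E] [Module ℝ E]

def PointedCone.ofConvex (K : Set E) (hK : Convex ℝ K) (h0 : (0 : E) ∈ K)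
    (hsmul : ∀ t : ℝ, 0 ≤ t → ∀ y ∈ K, t • y ∈ K) : PointedCone ℝ E where
  carrier := K
  zero_mem' := h0
  smul_mem' c y hy := hsmul c c.2 y hy
  add_mem' {a b} ha hb := by
    have hmid : (2 : ℝ)⁻¹ • a + (2 : ℝ)⁻¹ • b ∈ K :=
      hK ha hb (by norm_num) (by norm_num) (by norm_num)
    convert hsmul 2 zero_le_two _ hmid using 1
    module

variable [TopologicalSpace E]

theorem exists_pos_add_smul_mem [ContinuousAdd E] [ContinuousSMul ℝ E] {s : Set E} {a : E}
    (hs : s ∈ 𝓝 a) (b : E) : ∃ t : ℝ, 0 < t ∧ a + t • b ∈ s := by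
  have hlim : Tendsto (fun t : ℝ => a + t • b) (𝓝[>] 0) (𝓝 a) :=
    ((continuous_const.add (continuous_id.smul continuous_const)).tendsto' 0 a
      (by simp)).mono_left nhdsWithin_le_nhds
  obtain ⟨t, hts, ht⟩ := ((hlim.eventually_mem hs).and self_mem_nhdsWithin).exists
  exact ⟨t, ht, hts⟩

namespace PointedCone

variable (C : PointedCone ℝ E)

theorem add_mem_interior [IsTopologicalAddGroup E] {a b : E} (ha : a ∈ C)
    (hb : b ∈ interior (C : Set E)) : a + b ∈ interior (C : Set E) := by
  refine interior_maximal ?_ (isOpen_interior.add_left (s := {a})) (Set.add_mem_add rfl hb)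
  rintro _ ⟨a, rfl, c, hc, rfl⟩
  exact C.add_mem ha (interior_subset hc)

theorem smul_mem_interior [ContinuousConstSMul ℝ E] {t : ℝ} (ht : 0 < t) {b : E}
    (hb : b ∈ interior (C : Set E)) : t • b ∈ interior (C : Set E) := by
  refine interior_mono ?_ (interior_smul₀ ht.ne' (C : Set E) ▸ Set.smul_mem_smul_set hb)
  rintro _ ⟨c, hc, rfl⟩
  exact C.smul_mem ht.le hc

theorem pos_of_smul_mem_interior [IsTopologicalAddGroup E] {e : E} (he : e ∈ C)
    (h0 : (0 : E) ∉ interior (C : Set E)) {c : ℝ} (hc : c • e ∈ interior (C : Set E)) : 0 < c := by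
  by_contra! hc0
  refine h0 ?_
  simpa [← add_smul] using C.add_mem_interior (C.smul_mem (neg_nonneg.2 hc0) he) hc

end PointedCone

end Cone

theorem zero_notMem_interior_of_mem_wMinSet {Y : Type*} [NormedAddCommGroup Y] {A K : Set Y}
    {a : Y} (ha : a ∈ wMinSet A K) : (0 : Y) ∉ interior K := by
  simpa using ha.2 a ha.1

section Gerstewitz

variable {Y : Type*} [NormedAddCommGroup Y] [NormedSpace ℝ Y] {C : PointedCone ℝ Y} {e : Y}

theorem psiE_set_nonempty (he : e ∈ interior (C : Set Y)) (y : Y) :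
    {t : ℝ | t • e - y ∈ C}.Nonempty := by
  obtain ⟨s, hs, hmem⟩ := exists_pos_add_smul_mem (mem_interior_iff_mem_nhds.1 he) (-y)
  have hrw : s⁻¹ • (e + s • -y) = s⁻¹ • e - y := by
    rw [smul_add, smul_smul, inv_mul_cancel₀ hs.ne', one_smul, sub_eq_add_neg]
  refine ⟨s⁻¹, ?_⟩
  change s⁻¹ • e - y ∈ C
  exact hrw ▸ C.smul_mem (inv_pos.2 hs).le hmem

theorem psiE_set_bddBelow (he : e ∈ interior (C : Set Y)) (h0 : (0 : Y) ∉ interior (C : Set Y))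
    (y : Y) : BddBelow {t : ℝ | t • e - y ∈ C} := by
  obtain ⟨s, hs, hmem⟩ := exists_pos_add_smul_mem (isOpen_interior.mem_nhds he) y
  refine ⟨-s⁻¹, fun t ht => ?_⟩
  have hpos : 0 < s * t + 1 := by
    refine C.pos_of_smul_mem_interior (interior_subset he) h0 ?_
    convert C.add_mem_interior (C.smul_mem hs.le ht) hmem using 1
    module
  have hsum : 0 < t + s⁻¹ := by
    have := mul_pos (inv_pos.2 hs) hpos
    rwa [mul_add, ← mul_assoc, inv_mul_cancel₀ hs.ne', one_mul, mul_one] at this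
  linarith

theorem psiE_le (he : e ∈ interior (C : Set Y)) (h0 : (0 : Y) ∉ interior (C : Set Y)) {y : Y}
    {t : ℝ} (h : t • e - y ∈ C) : psiE C e y ≤ t :=
  csInf_le (psiE_set_bddBelow he h0 y) h

theorem psiE_lt_iff (he : e ∈ interior (C : Set Y)) (h0 : (0 : Y) ∉ interior (C : Set Y))
    {y : Y} {t : ℝ} : psiE C e y < t ↔ t • e - y ∈ interior (C : Set Y) := by
  constructor
  · intro h
    obtain ⟨t', ht'C, ht't⟩ := exists_lt_of_csInf_lt (psiE_set_nonempty he y) h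
    convert C.add_mem_interior ht'C (C.smul_mem_interior (sub_pos.2 ht't) he) using 1
    module
  · intro h
    obtain ⟨d, hd, hmem⟩ := exists_pos_add_smul_mem (mem_interior_iff_mem_nhds.1 h) (-e)
    have hrw : t • e - y + d • -e = (t - d) • e - y := by module
    have hle : psiE C e y ≤ t - d := psiE_le he h0 (hrw ▸ hmem)
    linarith

theorem psiE_zero (he : e ∈ interior (C : Set Y)) (h0 : (0 : Y) ∉ interior (C : Set Y)) :
    psiE C e 0 = 0 := by
  refine le_antisymm (psiE_le he h0 (by simp)) (not_lt.1 fun h => h0 ?_)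
  simpa using (psiE_lt_iff he h0).1 h

theorem psiE_le_psiE_add_s13 (he : e ∈ interior (C : Set Y)) (h0 : (0 : Y) ∉ interior (C : Set Y))
    (y : Y) {k : Y} (hk : k ∈ C) : psiE C e y ≤ psiE C e (y + k) := by
  refine le_of_forall_gt fun t ht => (psiE_lt_iff he h0).2 ?_
  convert C.add_mem_interior hk ((psiE_lt_iff he h0).1 ht) using 1
  abel

theorem isOpen_setOf_psiE_lt (he : e ∈ interior (C : Set Y))
    (h0 : (0 : Y) ∉ interior (C : Set Y)) : IsOpen {p : Y × ℝ | psiE C e p.1 < p.2} := by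
  simp only [psiE_lt_iff he h0]
  exact isOpen_interior.preimage ((continuous_snd.smul continuous_const).sub continuous_fst)

theorem convex_setOf_psiE_lt (he : e ∈ interior (C : Set Y))
    (h0 : (0 : Y) ∉ interior (C : Set Y)) : Convex ℝ {p : Y × ℝ | psiE C e p.1 < p.2} := by
  simp only [psiE_lt_iff he h0]
  exact C.convex.interior.linear_preimage
    ((LinearMap.snd ℝ Y ℝ).smulRight e - LinearMap.fst ℝ Y ℝ)

end Gerstewitz

theorem convex_setOf_mem_add_pointedCone {X Y : Type*} [AddCommGroup X] [Module ℝ X]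
    [AddCommGroup Y] [Module ℝ Y] (C : PointedCone ℝ Y) {F : X → Set Y}
    (hconv : ∀ x₁ x₂ : X, (F x₁).Nonempty → (F x₂).Nonempty → ∀ t : ℝ, t ∈ Set.Ioo (0:ℝ) 1 →
      t • F x₁ + (1 - t) • F x₂ ⊆ F (t • x₁ + (1 - t) • x₂) + C) :
    Convex ℝ {p : X × Y | p.2 ∈ F p.1 + C} := by
  refine convex_iff_forall_pos.2 ?_
  rintro ⟨x₁, _⟩ ⟨y₁, hy₁, k₁, hk₁, rfl⟩ ⟨x₂, _⟩ ⟨y₂, hy₂, k₂, hk₂, rfl⟩ a b ha hb hab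
  obtain rfl : b = 1 - a := by linarith
  obtain ⟨y, hy, k, hk, hyk⟩ := hconv x₁ x₂ ⟨y₁, hy₁⟩ ⟨y₂, hy₂⟩ a ⟨ha, by linarith⟩
    (Set.add_mem_add (Set.smul_mem_smul_set hy₁) (Set.smul_mem_smul_set hy₂))
  refine ⟨y, hy, k + (a • k₁ + (1 - a) • k₂),
    C.add_mem hk (C.add_mem (C.smul_mem ha.le hk₁) (C.smul_mem hb.le hk₂)), ?_⟩
  simp only [Prod.smul_mk, Prod.mk_add_mk]
  rw [← add_assoc, show y + k = _ from hyk]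
  module

section Separation

variable {X Y : Type*} [AddCommGroup X] [Module ℝ X] [AddCommGroup Y] [Module ℝ Y]

theorem convex_setOf_exists_le_linearMap {G : Set (X × Y)} (hG : Convex ℝ G) (φ : X →ₗ[ℝ] ℝ)
    (x₀ : X) (y₀ : Y) :
    Convex ℝ {q : Y × ℝ | ∃ p ∈ G, q.1 = p.2 - y₀ ∧ q.2 ≤ φ (p.1 - x₀)} := by
  rintro ⟨_, s₁⟩ ⟨p, hp, rfl, hs₁⟩ ⟨_, s₂⟩ ⟨q, hq, rfl, hs₂⟩ a b ha hb hab
  refine ⟨a • p + b • q, hG hp hq ha hb hab, ?_, ?_⟩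
  · calc a • (p.2 - y₀) + b • (q.2 - y₀) = a • p.2 + b • q.2 - (a + b) • y₀ := by module
      _ = (a • p + b • q).2 - y₀ := by rw [hab, one_smul]; rfl
  · calc a • s₁ + b • s₂ ≤ a * φ (p.1 - x₀) + b * φ (q.1 - x₀) := by
          simp only [smul_eq_mul]; gcongr
      _ = φ (a • p.1 + b • q.1 - (a + b) • x₀) := by
          simp only [map_sub, map_add, map_smul, smul_eq_mul]; ring
      _ = φ ((a • p + b • q).1 - x₀) := by rw [hab, one_smul]; rfl

theorem exists_clm_between_of_le_on_convex [TopologicalSpace Y] [IsTopologicalAddGroup Y]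
    [ContinuousSMul ℝ Y]
    {ψ : Y → ℝ} (hψ0 : ψ 0 ≤ 0) (hopen : IsOpen {p : Y × ℝ | ψ p.1 < p.2})
    (hconvex : Convex ℝ {p : Y × ℝ | ψ p.1 < p.2}) {G : Set (X × Y)} (hG : Convex ℝ G)
    {x₀ : X} {y₀ : Y} (h₀ : (x₀, y₀) ∈ G) (φ : X →ₗ[ℝ] ℝ)
    (hφ : ∀ p ∈ G, φ (p.1 - x₀) ≤ ψ (p.2 - y₀)) :
    ∃ ys : Y →L[ℝ] ℝ, (∀ y, ys y ≤ ψ y) ∧ ∀ p ∈ G, φ (p.1 - x₀) ≤ ys (p.2 - y₀) := by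
  obtain ⟨f, u, hfA, hfB⟩ := geometric_hahn_banach_open hconvex hopen
    (convex_setOf_exists_le_linearMap hG φ x₀ y₀) <| Set.disjoint_left.2 <| by
      rintro ⟨_, s⟩ hs ⟨p, hp, rfl, hsp⟩
      exact (hφ p hp).not_gt (hs.trans_le hsp)
  set l := f.comp (ContinuousLinearMap.inl ℝ Y ℝ)
  set c := f (0, 1)
  have hf : ∀ v s, f (v, s) = l v + s * c := fun v s => by
    rw [show ((v, s) : Y × ℝ) = (v, 0) + s • (0, 1) by simp, map_add, map_smul, smul_eq_mul]
    rfl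
  have hA : ∀ v, l v + ψ v * c ≤ u := fun v => by
    have hlim : Tendsto (fun s => l v + s * c) (𝓝[>] (ψ v)) (𝓝 (l v + ψ v * c)) :=
      ((continuous_const.add (continuous_id.mul continuous_const)).tendsto _).mono_left
        nhdsWithin_le_nhds
    refine le_of_tendsto hlim (eventually_nhdsWithin_of_forall fun s hs => ?_)
    exact (hf v s ▸ hfA (v, s) hs).le
  have hu_le : u ≤ 0 := by simpa [hf] using hfB (0, 0) ⟨(x₀, y₀), h₀, by simp, by simp⟩
  have hc : c < 0 := by
    have := hfA (0, 1) (hψ0.trans_lt one_pos)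
    rw [hf, map_zero, zero_add, one_mul] at this
    linarith
  have hu : 0 ≤ u := by
    have := mul_nonneg_of_nonpos_of_nonpos hψ0 hc.le
    linarith [hA 0, map_zero l]
  refine ⟨(-c)⁻¹ • l, fun y => ?_, fun p hp => ?_⟩
  · rw [smul_apply, smul_eq_mul, inv_mul_le_iff₀ (neg_pos.2 hc)]
    linarith [hA y]
  · have hB := hf _ _ ▸ hfB (p.2 - y₀, φ (p.1 - x₀)) ⟨p, hp, rfl, le_rfl⟩
    rw [smul_apply, smul_eq_mul, le_inv_mul_iff₀ (neg_pos.2 hc)]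
    linarith

end Separation

section LowerInnerFunction

variable {X Y : Type*} [NormedAddCommGroup X] [NormedSpace ℝ X] [NormedAddCommGroup Y]
  [NormedSpace ℝ Y] {C : PointedCone ℝ Y} {e : Y} {F : X → Set Y}

theorem glow_le_psiE_sub (he : e ∈ interior (C : Set Y)) (h0 : (0 : Y) ∉ interior (C : Set Y))
    {x : X} {y : Y} (hy : y ∈ F x + C) (z : Y) : glow C e F x z ≤ psiE C e (y - z) := by
  obtain ⟨y₀, hy₀, k, hk, rfl⟩ := hy
  calc glow C e F x z ≤ psiE C e (y₀ - z) := iInf₂_le y₀ hy₀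
    _ ≤ psiE C e (y₀ + k - z) := by
      rw [add_sub_right_comm]
      exact EReal.coe_le_coe_iff.2 (psiE_le_psiE_add_s13 he h0 _ hk)

theorem glow_eq_zero_of_mem_wMinSet (he : e ∈ interior (C : Set Y)) {xbar : X} {ybar : Y}
    (hybar : ybar ∈ wMinSet (F xbar + (C : Set Y)) C) : glow C e F xbar ybar = 0 := by
  have h0 := zero_notMem_interior_of_mem_wMinSet hybar
  refine le_antisymm ?_ (le_iInf₂ fun y hy => ?_)
  · simpa [psiE_zero he h0] using glow_le_psiE_sub he h0 hybar.1 ybar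
  · refine EReal.coe_nonneg.2 (not_lt.1 fun hlt => ?_)
    refine hybar.2 y (Set.subset_add_left _ C.zero_mem hy) ?_
    simpa using (psiE_lt_iff he h0).1 hlt

end LowerInnerFunction

theorem stmt13_general
    {X Y : Type*} [NormedAddCommGroup X] [NormedSpace ℝ X]
    [NormedAddCommGroup Y] [NormedSpace ℝ Y]
    (K : Set Y) (e : Y) (F : X → Set Y) (xbar : X)
    (hKcv : Convex ℝ K)
    (hKcone : ∀ t : ℝ, 0 ≤ t → ∀ y ∈ K, t • y ∈ K)
    (he : e ∈ interior K)
    (hconv : ∀ x₁ x₂ : X, (F x₁).Nonempty → (F x₂).Nonempty → ∀ t : ℝ, t ∈ Set.Ioo (0:ℝ) 1 →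
      t • F x₁ + (1 - t) • F x₂ ⊆ F (t • x₁ + (1 - t) • x₂) + K)
    (ybar : Y) (hybar : ybar ∈ wMinSet (F xbar + K) K) :
    {xs : X →L[ℝ] ℝ | ∀ x : X,
        glow K e F xbar ybar + ((xs (x - xbar) : ℝ) : EReal) ≤ glow K e F x ybar} =
      {xs : X →L[ℝ] ℝ | ∃ ys : Y →L[ℝ] ℝ, (∀ y : Y, ys y ≤ psiE K e y) ∧
        ∀ x : X, ∀ y ∈ F x + K, xs (x - xbar) ≤ ys (y - ybar)} := by
  let C := PointedCone.ofConvex K hKcv (by simpa using hKcone 0 le_rfl e (interior_subset he))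
    hKcone
  have h0 := zero_notMem_interior_of_mem_wMinSet hybar
  have hglow : glow K e F xbar ybar = 0 := glow_eq_zero_of_mem_wMinSet (C := C) he hybar
  ext xs
  simp only [Set.mem_ofPred_eq, hglow, zero_add]
  constructor
  · intro hxs
    obtain ⟨ys, hys, hxys⟩ := exists_clm_between_of_le_on_convex (psiE_zero (C := C) he h0).le
      (isOpen_setOf_psiE_lt (C := C) he h0) (convex_setOf_psiE_lt (C := C) he h0)
      (convex_setOf_mem_add_pointedCone C hconv) (x₀ := xbar) (y₀ := ybar) hybar.1 xs
      fun p hp => EReal.coe_le_coe_iff.1 <|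
        (hxs p.1).trans (glow_le_psiE_sub (C := C) he h0 hp ybar)
    exact ⟨ys, hys, fun x y hy => hxys (x, y) hy⟩
  · rintro ⟨ys, hys, hxys⟩ x
    refine le_iInf₂ fun y hy => EReal.coe_le_coe_iff.2 ?_
    exact (hxys x y (Set.subset_add_left _ C.zero_mem hy)).trans (hys _)

/-- for F ⪯ˡ_K-convex and locally l-bounded at x̄, and ȳ ∈ WMin(E_F(x̄),K),
the convex subdifferential of g_{l,ȳ} = g_l(·,ȳ) at x̄ equals the union over y* ∈ ∂Ψ_e(0)
of the coderivatives D*E_F(x̄,ȳ)(y*), where E_F(x) = F(x) + K. -/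
theorem stmt13
    {X Y : Type*} [NormedAddCommGroup X] [NormedSpace ℝ X] [CompleteSpace X]
    [NormedAddCommGroup Y] [NormedSpace ℝ Y] [CompleteSpace Y]
    (K : Set Y) (e : Y) (F : X → Set Y) (Ω : Set X) (xbar : X)
    (hKcl : IsClosed K) (hKcv : Convex ℝ K)
    (hKcone : ∀ t : ℝ, 0 ≤ t → ∀ y ∈ K, t • y ∈ K)
    (hKpt : K ∩ (-K) = {0})
    (he : e ∈ interior K)
    (hΩne : Ω.Nonempty) (hΩcl : IsClosed Ω)
    (hΩdom : Ω ⊆ interior {x | (F x).Nonempty})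
    (hxΩ : xbar ∈ Ω)
    (hconv : ∀ x₁ x₂ : X, (F x₁).Nonempty → (F x₂).Nonempty → ∀ t : ℝ, t ∈ Set.Ioo (0:ℝ) 1 →
      t • F x₁ + (1 - t) • F x₂ ⊆ F (t • x₁ + (1 - t) • x₂) + K)
    (hbd : ∃ μ > (0:ℝ), ∃ U ∈ 𝓝 xbar, ∀ x ∈ U,
      (F x ∩ {y : Y | y + μ • e ∈ K ∧ μ • e - y ∈ K}) + K = F x + K)
    (ybar : Y) (hybar : ybar ∈ wMinSet (F xbar + K) K) :
    {xs : X →L[ℝ] ℝ | ∀ x : X,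
        glow K e F xbar ybar + ((xs (x - xbar) : ℝ) : EReal) ≤ glow K e F x ybar} =
      {xs : X →L[ℝ] ℝ | ∃ ys : Y →L[ℝ] ℝ, (∀ y : Y, ys y ≤ psiE K e y) ∧
        ∀ x : X, ∀ y ∈ F x + K, xs (x - xbar) ≤ ys (y - ybar)} :=
  stmt13_general K e F xbar hKcv hKcone he hconv ybar hybar
end

section
/- Let F be ⪯ˡ_K-convex, let E_F(x) := F(x) + K, and let (x̄,ȳ₁), (x̄,ȳ₂) be points of the graph of E_F with ȳ₂ − ȳ₁ ∈ K. Then for every y* in the dual cone K* := {y* ∈ Y* : ⟨y*, k⟩ ≥ 0 for all k ∈ K}, one has D*E_F(x̄,ȳ₂)(y*) ⊆ D*E_F(x̄,ȳ₁)(y*), where x* ∈ D*E_F(x̄,ȳ)(y*) means ⟨x*, x − x̄⟩ ≤ ⟨y*, y − ȳ⟩ for all (x,y) with y ∈ E_F(x). -/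
open Set Topology Metric Pointwise

/-! Since `ȳ₂ - ȳ₁ ∈ K` and `K + K ⊆ K`, translation by `ȳ₂ - ȳ₁` maps the graph of `E_F` into
itself, and it turns `y - ȳ₁` into `(y + (ȳ₂ - ȳ₁)) - ȳ₂`; so the coderivative inequality at `ȳ₂`
yields the one at `ȳ₁`. -/

theorem Convex.add_mem_of_forall_smul_mem {E : Type*} [AddCommGroup E] [Module ℝ E] {K : Set E}
    (hKcv : Convex ℝ K) (hKcone : ∀ t : ℝ, 0 ≤ t → ∀ y ∈ K, t • y ∈ K)
    {u v : E} (hu : u ∈ K) (hv : v ∈ K) : u + v ∈ K := by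
  have hmid : (1 / 2 : ℝ) • u + (1 / 2 : ℝ) • v ∈ K :=
    hKcv hu hv (by norm_num) (by norm_num) (by norm_num)
  simpa [smul_add, smul_smul] using hKcone 2 (by norm_num) _ hmid

theorem add_mem_add_of_add_mem {Y : Type*} [AddCommGroup Y] {A K : Set Y}
    (hK : ∀ u ∈ K, ∀ v ∈ K, u + v ∈ K) {y d : Y} (hy : y ∈ A + K) (hd : d ∈ K) :
    y + d ∈ A + K := by
  obtain ⟨a, ha, k, hk, rfl⟩ := hy
  exact ⟨a, ha, k + d, hK k hk d hd, (add_assoc a k d).symm⟩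

theorem stmt14_general
    {X Y : Type*} [NormedAddCommGroup X] [NormedSpace ℝ X]
    [NormedAddCommGroup Y] [NormedSpace ℝ Y]
    (K : Set Y) (F : X → Set Y)
    (hKcv : Convex ℝ K)
    (hKcone : ∀ t : ℝ, 0 ≤ t → ∀ y ∈ K, t • y ∈ K)
    (xbar : X) (ybar₁ ybar₂ : Y)
    (horder : ybar₂ - ybar₁ ∈ K)
    (ys : Y →L[ℝ] ℝ) :
    ∀ xs : X →L[ℝ] ℝ,
      (∀ x : X, ∀ y ∈ F x + K, xs (x - xbar) ≤ ys (y - ybar₂)) →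
      (∀ x : X, ∀ y ∈ F x + K, xs (x - xbar) ≤ ys (y - ybar₁)) := by
  intro xs hxs x y hy
  have hKadd : ∀ u ∈ K, ∀ v ∈ K, u + v ∈ K := fun u hu v hv =>
    hKcv.add_mem_of_forall_smul_mem hKcone hu hv
  have hshift : y + (ybar₂ - ybar₁) ∈ F x + K := add_mem_add_of_add_mem hKadd hy horder
  simpa only [show y + (ybar₂ - ybar₁) - ybar₂ = y - ybar₁ by abel] using hxs x _ hshift

/-- monotonicity of the coderivative of E_F(x) = F(x) + K along the cone order,
for ⪯ˡ_K-convex F and y* in the dual cone K*. -/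
theorem stmt14
    {X Y : Type*} [NormedAddCommGroup X] [NormedSpace ℝ X] [CompleteSpace X]
    [NormedAddCommGroup Y] [NormedSpace ℝ Y] [CompleteSpace Y]
    (K : Set Y) (F : X → Set Y)
    (hKcl : IsClosed K) (hKcv : Convex ℝ K)
    (hKcone : ∀ t : ℝ, 0 ≤ t → ∀ y ∈ K, t • y ∈ K)
    (hKpt : K ∩ (-K) = {0})
    (hKsolid : (interior K).Nonempty)
    (hconv : ∀ x₁ x₂ : X, (F x₁).Nonempty → (F x₂).Nonempty → ∀ t : ℝ, t ∈ Set.Ioo (0:ℝ) 1 →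
      t • F x₁ + (1 - t) • F x₂ ⊆ F (t • x₁ + (1 - t) • x₂) + K)
    (xbar : X) (ybar₁ ybar₂ : Y)
    (hy₁ : ybar₁ ∈ F xbar + K) (hy₂ : ybar₂ ∈ F xbar + K)
    (horder : ybar₂ - ybar₁ ∈ K)
    (ys : Y →L[ℝ] ℝ) (hys : ∀ k ∈ K, 0 ≤ ys k) :
    ∀ xs : X →L[ℝ] ℝ,
      (∀ x : X, ∀ y ∈ F x + K, xs (x - xbar) ≤ ys (y - ybar₂)) →
      (∀ x : X, ∀ y ∈ F x + K, xs (x - xbar) ≤ ys (y - ybar₁)) :=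
  stmt14_general K F hKcv hKcone xbar ybar₁ ybar₂ horder ys
end
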